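/- arXiv:2603.27688 — 3 statements merged into one kernel-verified Lean document; each statement's English description precedes it below -/
import Mathlib

section
/- Let Ω : Circle × Circle → Circle be a continuous map satisfying Ω(z₁·z₂, w) = Ω(z₁,w)·Ω(z₂,w) and Ω(z, w₁·w₂) = Ω(z,w₁)·Ω(z,w₂) for all inputs, and let θ : Circle → Circle be a continuous map with θ(1) = 1 and θ(z·w) = Ω(z,w)·θ(z)·θ(w) for all z, w ∈ Circle. Then θ is a group homomorphism, i.e. θ(z·w) = θ(z)·θ(w) for all z, w ∈ Circle. -/
/-!
A continuous bicharacter `Ω` of the circle is trivial. If `ζ ^ n = 1`, then `w ↦ Ω (ζ, w)` is a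
continuous map from the connected circle into the finite set of `n`-th roots of unity, so it is
constant, equal to `Ω (ζ, 1) = 1`. Roots of unity are dense in the circle, hence `Ω ≡ 1`, and the
defining identity of a quadratic refinement of `Ω` is just multiplicativity.
-/

open Real

namespace Circle

lemma finite_setOf_pow_eq_one {n : ℕ} (hn : n ≠ 0) : {z : Circle | z ^ n = 1}.Finite := by
  refine ((Polynomial.nthRoots n (1 : ℂ)).toFinset.finite_toSet.preimage
    Subtype.coe_injective.injOn).subset fun z (hz : z ^ n = 1) => ?_
  simpa [Polynomial.mem_nthRoots (Nat.pos_of_ne_zero hn)] using congrArg ((↑) : Circle → ℂ) hz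

lemma isOfFinOrder_exp_two_pi_mul_rat (q : ℚ) : IsOfFinOrder (exp (2 * π * q)) := by
  refine isOfFinOrder_iff_pow_eq_one.mpr ⟨q.den, q.pos, ?_⟩
  have hq : (q : ℝ) * q.den = q.num := by exact_mod_cast Rat.mul_den_eq_num q
  rw [← exp_natCast_mul, ← exp_two_pi_mul_int q.num, ← hq]
  ring_nf

lemma dense_setOf_isOfFinOrder : Dense {z : Circle | IsOfFinOrder z} := by
  have hsurj : Function.Surjective fun t : ℝ => exp (2 * π * t) :=
    exp_surjective.comp (mul_left_surjective₀ (by positivity))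
  refine Dense.mono ?_ (hsurj.denseRange.comp Rat.denseRange_cast (by fun_prop))
  rintro _ ⟨q, rfl⟩
  exact isOfFinOrder_exp_two_pi_mul_rat q

lemma constant_of_continuous_of_pow_eq_one {X : Type*} [TopologicalSpace X] [PreconnectedSpace X]
    {f : X → Circle} (hf : Continuous f) {n : ℕ} (hn : n ≠ 0) (hfn : ∀ x, f x ^ n = 1)
    (x y : X) : f x = f y :=
  isPreconnected_univ.constant_of_mapsTo (finite_setOf_pow_eq_one hn).isDiscrete hf.continuousOn
    (fun x _ => hfn x) trivial trivial

lemma bicharacter_apply_eq_one_of_isOfFinOrder {G M : Type*} [Monoid G] [Monoid M]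
    [TopologicalSpace M] [PreconnectedSpace M] {Ω : G × M → Circle}
    (hΩ : ∀ z, Continuous fun w => Ω (z, w))
    (hmul_left : ∀ z₁ z₂ w, Ω (z₁ * z₂, w) = Ω (z₁, w) * Ω (z₂, w))
    (hmul_right : ∀ z w₁ w₂, Ω (z, w₁ * w₂) = Ω (z, w₁) * Ω (z, w₂))
    {ζ : G} (hζ : IsOfFinOrder ζ) (w : M) : Ω (ζ, w) = 1 := by
  obtain ⟨n, hn, hζn⟩ := isOfFinOrder_iff_pow_eq_one.mp hζ
  have hpow (w : M) : Ω (ζ, w) ^ n = 1 := by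
    let χ : G →* Circle := MonoidHom.mk' (fun z => Ω (z, w)) (hmul_left · · w)
    calc Ω (ζ, w) ^ n = χ (ζ ^ n) := (map_pow χ ζ n).symm
      _ = 1 := by rw [hζn, map_one]
  calc Ω (ζ, w) = Ω (ζ, 1) := constant_of_continuous_of_pow_eq_one (hΩ ζ) hn.ne' hpow w 1
    _ = 1 := map_one (MonoidHom.mk' (fun w => Ω (ζ, w)) (hmul_right ζ))

lemma bicharacter_eq_one {Ω : Circle × Circle → Circle} (hΩ : Continuous Ω)
    (hmul_left : ∀ z₁ z₂ w, Ω (z₁ * z₂, w) = Ω (z₁, w) * Ω (z₂, w))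
    (hmul_right : ∀ z w₁ w₂, Ω (z, w₁ * w₂) = Ω (z, w₁) * Ω (z, w₂)) (z w : Circle) :
    Ω (z, w) = 1 := by
  refine congrFun (Continuous.ext_on dense_setOf_isOfFinOrder (f := fun z => Ω (z, w))
    (by fun_prop) continuous_const fun ζ hζ => ?_) z
  exact bicharacter_apply_eq_one_of_isOfFinOrder (by fun_prop) hmul_left hmul_right hζ w

end Circle

theorem continuous_quadratic_refinement_circle_is_hom_general
    (Ω : Circle × Circle → Circle)
    (hΩcont : Continuous Ω)
    (hmul_left : ∀ z₁ z₂ w : Circle, Ω (z₁ * z₂, w) = Ω (z₁, w) * Ω (z₂, w))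
    (hmul_right : ∀ z w₁ w₂ : Circle, Ω (z, w₁ * w₂) = Ω (z, w₁) * Ω (z, w₂))
    (θ : Circle → Circle)
    (hθquad : ∀ z w : Circle, θ (z * w) = Ω (z, w) * θ z * θ w) :
    ∀ z w : Circle, θ (z * w) = θ z * θ w := by
  intro z w
  rw [hθquad, Circle.bicharacter_eq_one hΩcont hmul_left hmul_right, one_mul]

/-- **Quadratic refinements of continuous bicharacters on the circle are characters.**
If `Ω : Circle × Circle → Circle` is a continuous bicharacter and
`θ : Circle → Circle` is a continuous quadratic refinement of `Ω`
(i.e. `θ 1 = 1` and `θ (z * w) = Ω (z, w) * θ z * θ w`), then `θ` is a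
group homomorphism. -/
theorem continuous_quadratic_refinement_circle_is_hom
    (Ω : Circle × Circle → Circle)
    (hΩcont : Continuous Ω)
    (hmul_left : ∀ z₁ z₂ w : Circle, Ω (z₁ * z₂, w) = Ω (z₁, w) * Ω (z₂, w))
    (hmul_right : ∀ z w₁ w₂ : Circle, Ω (z, w₁ * w₂) = Ω (z, w₁) * Ω (z, w₂))
    (θ : Circle → Circle)
    (hθcont : Continuous θ)
    (hθone : θ 1 = 1)
    (hθquad : ∀ z w : Circle, θ (z * w) = Ω (z, w) * θ z * θ w) :
    ∀ z w : Circle, θ (z * w) = θ z * θ w :=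
  continuous_quadratic_refinement_circle_is_hom_general Ω hΩcont hmul_left hmul_right θ hθquad
end

section
/- Let k be a positive even integer, L a symmetric m×m integer matrix, and A an m×m integer matrix whose determinant is a unit in ℤ (i.e. det A = ±1). Then ∑_{g ∈ {0,…,k−1}^m} exp((π i/k) · gᵀ (Aᵀ L A) g) = ∑_{g ∈ {0,…,k−1}^m} exp((π i/k) · gᵀ L g). -/
/-!
For even `k` and symmetric `L`, the phase `g ↦ exp (π i gᵀ L g / k)` is `k`-periodic in each
coordinate of `g`: changing `g` by `k w` changes `gᵀ L g` by `2k (wᵀ L g) + k² (wᵀ L w)`, a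
multiple of `2k`. So the Gauss sum is a sum over `(ℤ/k)ᵐ`, and substituting `g ↦ A g`, which
permutes `(ℤ/k)ᵐ` because `det A` is a unit, turns the phase of `Aᵀ L A` into that of `L`.
-/

open Matrix

theorem Complex.exp_pi_mul_I_div_mul_eq_of_dvd_sub (k : ℕ) {a b : ℤ} (h : 2 * (k : ℤ) ∣ a - b) :
    Complex.exp ((Real.pi : ℂ) * Complex.I / (k : ℂ) * (a : ℂ))
      = Complex.exp ((Real.pi : ℂ) * Complex.I / (k : ℂ) * (b : ℂ)) := by
  obtain ⟨c, hc⟩ := h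
  obtain rfl : a = b + 2 * k * c := by linarith
  rcases eq_or_ne k 0 with rfl | hk
  · simp
  refine Complex.exp_eq_exp_iff_exists_int.mpr ⟨c, ?_⟩
  push_cast
  field_simp

namespace Matrix

variable {ι : Type*} [Fintype ι]

theorem dotProduct_mulVec_comm_of_isSymm {R : Type*} [CommSemiring R] {L : Matrix ι ι R}
    (hL : L.IsSymm) (v w : ι → R) : v ⬝ᵥ L *ᵥ w = w ⬝ᵥ L *ᵥ v := by
  rw [dotProduct_mulVec, dotProduct_comm, ← mulVec_transpose, hL.eq]

theorem dotProduct_transpose_mul_mul_mulVec {R : Type*} [CommSemiring R] (L A : Matrix ι ι R)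
    (v : ι → R) : v ⬝ᵥ (Aᵀ * L * A) *ᵥ v = (A *ᵥ v) ⬝ᵥ L *ᵥ (A *ᵥ v) := by
  rw [← mulVec_mulVec, ← mulVec_mulVec, dotProduct_mulVec, vecMul_transpose]

theorem two_mul_dvd_dotProduct_mulVec_sub {d : ℤ} (hd : Even d) {L : Matrix ι ι ℤ}
    (hL : L.IsSymm) {u v : ι → ℤ} (h : ∀ i, d ∣ u i - v i) :
    2 * d ∣ u ⬝ᵥ L *ᵥ u - v ⬝ᵥ L *ᵥ v := by
  choose w hw using h
  obtain ⟨t, rfl⟩ := hd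
  have hu : u = v + (t + t) • w := by
    ext i
    simp [← hw i]
  have hsymm := dotProduct_mulVec_comm_of_isSymm hL v w
  refine ⟨w ⬝ᵥ L *ᵥ v + t * (w ⬝ᵥ L *ᵥ w), ?_⟩
  rw [hu, mulVec_add, mulVec_smul, dotProduct_add, add_dotProduct, add_dotProduct,
    dotProduct_smul, smul_dotProduct, smul_dotProduct, dotProduct_smul, hsymm]
  simp only [smul_eq_mul]
  ring

variable [DecidableEq ι] {k : ℕ} [NeZero k]

theorem sum_fin_comp_mulVec_of_periodic {M : Type*} [AddCommMonoid M] (f : (ι → ℤ) → M)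
    (hf : ∀ u v : ι → ℤ, (∀ i, (k : ℤ) ∣ u i - v i) → f u = f v)
    {A : Matrix ι ι ℤ} (hA : IsUnit A.det) :
    ∑ g : ι → Fin k, f (A *ᵥ fun i => ((g i : ℕ) : ℤ))
      = ∑ g : ι → Fin k, f fun i => ((g i : ℕ) : ℤ) := by
  let e : (ι → ZMod k) ≃ (ι → Fin k) :=
    Equiv.piCongrRight fun _ =>
      { toFun := fun x => ⟨x.val, x.val_lt⟩
        invFun := fun i => (i : ℕ)
        left_inv := ZMod.natCast_zmod_val
        right_inv := fun i => Fin.ext (ZMod.val_cast_of_lt i.isLt) }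
  set Ak := A.map (Int.castRingHom (ZMod k))
  have hAk : Function.Bijective Ak.mulVec := by
    refine Finite.surjective_iff_bijective.mp (mulVec_surjective_iff_isUnit.mpr ?_)
    rw [isUnit_iff_isUnit_det]
    exact (Int.castRingHom (ZMod k)).map_det A ▸ hA.map (Int.castRingHom (ZMod k))
  have hreduce : ∀ x : ι → ZMod k,
      f (A *ᵥ fun i => ((x i).val : ℤ)) = f fun i => ((Ak *ᵥ x) i).val := by
    intro x
    refine hf _ _ fun i => ?_
    rw [← ZMod.intCast_eq_intCast_iff_dvd_sub, Int.cast_natCast, ZMod.natCast_zmod_val,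
      ← eq_intCast (Int.castRingHom (ZMod k)), RingHom.map_mulVec]
    congr 2
    ext j
    simp
  calc ∑ g : ι → Fin k, f (A *ᵥ fun i => ((g i : ℕ) : ℤ))
      = ∑ x, f fun i => ((Ak *ᵥ x) i).val := by
        rw [← e.sum_comp]
        exact Finset.sum_congr rfl fun x _ => hreduce x
    _ = ∑ x : ι → ZMod k, f fun i => ((x i).val : ℤ) :=
        hAk.sum_comp fun y => f fun i => ((y i).val : ℤ)
    _ = ∑ g : ι → Fin k, f fun i => ((g i : ℕ) : ℤ) :=
        e.sum_comp fun g => f fun i => ((g i : ℕ) : ℤ)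

end Matrix

/-- **Invariance of the level-`k` Gauss sum under the Kirby handle-slide move `K2`.**
For a positive even integer `k`, a symmetric integer matrix `L`, and
`A ∈ GL(m,ℤ)` (i.e. `det A` is a unit), the Gauss sum of `Aᵀ L A` equals that
of `L`. -/
theorem gauss_sum_handle_slide_invariance
    (k : ℕ) (hk : 0 < k) (hke : Even k)
    (m : ℕ) (L A : Matrix (Fin m) (Fin m) ℤ) (hL : L.IsSymm)
    (hA : IsUnit A.det) :
    (∑ g : Fin m → Fin k,
        Complex.exp ((Real.pi : ℂ) * Complex.I / (k : ℂ) *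
          ((((fun i => ((g i : ℕ) : ℤ)) ⬝ᵥ
              (Aᵀ * L * A).mulVec fun i => ((g i : ℕ) : ℤ)) : ℤ) : ℂ)))
      = ∑ g : Fin m → Fin k,
          Complex.exp ((Real.pi : ℂ) * Complex.I / (k : ℂ) *
            ((((fun i => ((g i : ℕ) : ℤ)) ⬝ᵥ
                L.mulVec fun i => ((g i : ℕ) : ℤ)) : ℤ) : ℂ)) := by
  have : NeZero k := ⟨hk.ne'⟩
  simp only [dotProduct_transpose_mul_mul_mulVec]
  refine sum_fin_comp_mulVec_of_periodic
    (fun u => Complex.exp ((Real.pi : ℂ) * Complex.I / (k : ℂ) * ((u ⬝ᵥ L *ᵥ u : ℤ) : ℂ)))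
    (fun u v huv => ?_) hA
  exact Complex.exp_pi_mul_I_div_mul_eq_of_dvd_sub k
    (two_mul_dvd_dotProduct_mulVec_sub hke.natCast hL huv)
end

section
/- Let k be a positive even integer, L a symmetric m×m integer matrix with signature σ(L), and ε ∈ {1, −1}. Let L' be the (m+1)×(m+1) block-diagonal matrix with blocks L and the 1×1 matrix (ε). Then k^{−(m+2)/2} · exp(−π i (σ(L)+ε)/4) · ∑_{g ∈ {0,…,k−1}^{m+1}} exp((π i/k)·gᵀ L' g) = k^{−(m+1)/2} · exp(−π i σ(L)/4) · ∑_{g ∈ {0,…,k−1}^m} exp((π i/k)·gᵀ L g). -/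
open Matrix

/-- The signature of a symmetric integer matrix: the number of positive
eigenvalues minus the number of negative eigenvalues of the associated real
symmetric matrix. -/
noncomputable def intSignature {n : Type*} [Fintype n] [DecidableEq n]
    (L : Matrix n n ℤ) : ℤ :=
  if h : (L.map (Int.cast : ℤ → ℝ)).IsHermitian then
    ((Finset.univ.filter fun i => 0 < h.eigenvalues i).card : ℤ)
      - ((Finset.univ.filter fun i => h.eigenvalues i < 0).card : ℤ)
  else 0

open Complex Real Filter Topology HurwitzZeta

/-!
Splitting off the last coordinate factors the Gauss sum of `L ⊕ (ε)` into `G_k(L)` times the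
one-variable sum `∑_{x < k} exp (π i ε x² / k)`, which for even `k` equals `√k · exp (π i ε / 4)`;
these are exactly the changes `k^(-1/2)` and `exp (-π i ε / 4)` of the normalising factor.

The one-variable sum is evaluated by the theta-function argument: as `t → 0⁺`,
`k √t · θ(1/k + i t)` tends to the Gauss sum (split `n = q k + r` and use the functional
equation of the Hurwitz kernel), and also to `(-i/k)^(-1/2) = √k · exp (π i / 4)` (apply
`θ(τ) = (-i τ)^(-1/2) θ(-1/τ)` twice, translating by the even integer `k` in between).
-/

lemma sumElim_dotProduct_fromBlocks_mulVec {R m n : Type*} [CommSemiring R] [Fintype m]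
    [Fintype n] (A : Matrix m m R) (D : Matrix n n R) (a : m → R) (b : n → R) :
    Sum.elim a b ⬝ᵥ fromBlocks A 0 0 D *ᵥ Sum.elim a b = a ⬝ᵥ A *ᵥ a + b ⬝ᵥ D *ᵥ b := by
  simp [fromBlocks_mulVec, sumElim_dotProduct_sumElim]

lemma ofReal_mul_cpow {r : ℝ} (hr : 0 < r) {z : ℂ} (hz : z ≠ 0) (s : ℂ) :
    ((r : ℂ) * z) ^ s = (r : ℂ) ^ s * z ^ s := by
  have hr' : (r : ℂ) ≠ 0 := ofReal_ne_zero.mpr hr.ne'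
  rw [cpow_def_of_ne_zero (mul_ne_zero hr' hz), cpow_def_of_ne_zero hr', cpow_def_of_ne_zero hz,
    log_ofReal_mul hr hz, add_mul, Complex.exp_add, ofReal_log hr.le]

lemma ofReal_cpow_half {x : ℝ} (hx : 0 ≤ x) : (x : ℂ) ^ (1 / 2 : ℂ) = √x := by
  rw [Real.sqrt_eq_rpow, ofReal_cpow hx]
  norm_num

lemma tendsto_const_mul_nhdsGT_zero {c : ℝ} (hc : 0 < c) :
    Tendsto (c * ·) (𝓝[>] 0) (𝓝[>] 0) := by
  simpa only [comap_mulLeft_nhdsGT_zero hc] using tendsto_comap (f := (c * ·)) (x := 𝓝[>] 0)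

lemma hasSum_jacobiTheta {τ : ℂ} (hτ : 0 < τ.im) :
    HasSum (fun n : ℤ => cexp (π * I * n ^ 2 * τ)) (jacobiTheta τ) := by
  rw [jacobiTheta_eq_jacobiTheta₂]
  simpa [jacobiTheta₂_term] using hasSum_jacobiTheta₂_term 0 hτ

lemma jacobiTheta_eq_inv_cpow_mul_jacobiTheta_neg_inv (τ : ℂ) :
    jacobiTheta τ = ((-I * τ) ^ (1 / 2 : ℂ))⁻¹ * jacobiTheta (-1 / τ) := by
  simpa [jacobiTheta_eq_jacobiTheta₂] using jacobiTheta₂_functional_equation 0 τ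

lemma jacobiTheta_add_natCast_of_even {n : ℕ} (hn : Even n) (τ : ℂ) :
    jacobiTheta (τ + n) = jacobiTheta τ := by
  obtain ⟨c, rfl⟩ := hn
  have hper : Function.Periodic jacobiTheta 2 := fun τ => by
    rw [add_comm]
    exact jacobiTheta_two_add τ
  simpa [← two_mul, mul_comm] using hper.nat_mul c τ

lemma tendsto_jacobiTheta_comap_im_atTop : Tendsto jacobiTheta (comap im atTop) (𝓝 1) := by
  have hexp : Tendsto (fun τ : ℂ => rexp (-π * τ.im)) (comap im atTop) (𝓝 0) :=
    (tendsto_exp_atBot.comp (tendsto_id.const_mul_atTop_of_neg (neg_neg_of_pos pi_pos))).comp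
      tendsto_comap
  simpa using (isBigO_at_im_infty_jacobiTheta_sub_one.trans_tendsto hexp).add_const 1

lemma tendsto_sqrt_mul_evenKernel (a : UnitAddCircle) :
    Tendsto (fun x => √x * evenKernel a x) (𝓝[>] 0) (𝓝 1) := by
  obtain ⟨p, hp, hO⟩ := isBigO_atTop_cosKernel_sub a
  have hexp : Tendsto (fun x => rexp (-p * x)) atTop (𝓝 0) :=
    tendsto_exp_atBot.comp (tendsto_id.const_mul_atTop_of_neg (neg_neg_of_pos hp))
  have hcos : Tendsto (cosKernel a) atTop (𝓝 1) := by
    simpa using (hO.trans_tendsto hexp).add_const 1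
  refine (hcos.comp tendsto_inv_nhdsGT_zero).congr' ?_
  filter_upwards [self_mem_nhdsWithin] with x (hx : 0 < x)
  rw [Function.comp_apply, evenKernel_functional_equation, ← Real.sqrt_eq_rpow, one_div, one_div,
    ← mul_assoc, mul_inv_cancel₀ (Real.sqrt_pos.mpr hx).ne', one_mul]

section
variable {k : ℕ}

-- Since `k` is even, `(q k + r)² / k ≡ r² / k` modulo `2`.
lemma cexp_pi_mul_I_mul_sq_mul_inv_add_I_mul (hk : 0 < k) (hke : Even k) (t : ℝ) (q : ℤ)
    (r : ℕ) :
    cexp (π * I * ((q * k + r : ℤ) : ℂ) ^ 2 * ((k : ℂ)⁻¹ + I * t)) =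
      cexp (π * I * r ^ 2 / k) * (rexp (-π * (q + r / k) ^ 2 * (k ^ 2 * t)) : ℝ) := by
  obtain ⟨c, hkc⟩ := hke
  have hkC : (k : ℂ) ≠ 0 := by exact_mod_cast hk.ne'
  have hc : (c : ℂ) = k / 2 := by
    rw [hkc]
    push_cast
    ring
  have hexponent : π * I * ((q * k + r : ℤ) : ℂ) ^ 2 * ((k : ℂ)⁻¹ + I * t) =
      (π * I * r ^ 2 / k + ((-π * (q + r / k) ^ 2 * (k ^ 2 * t) : ℝ) : ℂ)) +
        ((q ^ 2 * c + q * r : ℤ) : ℂ) * (2 * π * I) := by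
    push_cast
    rw [hc]
    field_simp
    ring_nf
    simp only [I_sq]
    ring
  rw [ofReal_exp, ← Complex.exp_add, hexponent, Complex.exp_add,
    Complex.exp_int_mul_two_pi_mul_I, mul_one]

lemma jacobiTheta_inv_add_I_mul_eq_sum (hk : 0 < k) (hke : Even k) {t : ℝ} (ht : 0 < t) :
    jacobiTheta ((k : ℂ)⁻¹ + I * t) =
      ∑ r : Fin k, cexp (π * I * r ^ 2 / k) * evenKernel ((r : ℝ) / k : ℝ) ((k : ℝ) ^ 2 * t) := by
  have : NeZero k := ⟨hk.ne'⟩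
  have hθ := hasSum_jacobiTheta (τ := (k : ℂ)⁻¹ + I * t) (by simpa using ht)
  have hpairs := ((Equiv.prodComm _ _).trans (Int.divModEquiv k).symm).hasSum_iff.mpr hθ
  refine (hpairs.prod_fiberwise fun r => ?_).unique (hasSum_fintype _)
  have hkernel := hasSum_int_evenKernel ((r : ℝ) / k) (t := k ^ 2 * t) (by positivity)
  refine ((hasSum_ofReal.mpr hkernel).mul_left (cexp (π * I * (r : ℕ) ^ 2 / k))).congr_fun
    fun q => ?_
  rw [← cexp_pi_mul_I_mul_sq_mul_inv_add_I_mul hk hke t q r]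
  simp [Int.divModEquiv]

lemma mul_sqrt_mul_jacobiTheta_inv_add_I_mul (hk : 0 < k) (hke : Even k) {t : ℝ} (ht : 0 < t) :
    (k * √t : ℂ) * jacobiTheta ((k : ℂ)⁻¹ + I * t) =
      ((-I * ((k : ℂ)⁻¹ + I * t)) ^ (1 / 2 : ℂ))⁻¹ * (((1 + I * k * t)⁻¹) ^ (1 / 2 : ℂ))⁻¹ *
        jacobiTheta (-(k : ℂ)⁻¹ + I * ((k ^ 2 * t)⁻¹ : ℝ)) := by
  have hkC : (k : ℂ) ≠ 0 := by exact_mod_cast hk.ne'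
  have htC : (t : ℂ) ≠ 0 := by exact_mod_cast ht.ne'
  set w : ℂ := 1 + I * k * t with hw_def
  have hw : w ≠ 0 := fun h => by
    have := congrArg im h
    simp [hw_def, hk.ne', ht.ne'] at this
  have hτ : (k : ℂ)⁻¹ + I * t = w / k := by
    rw [hw_def]
    field_simp
  have hshift : -1 / (w / k) + k = I * k ^ 2 * t / w := by
    rw [hw_def] at hw ⊢
    field_simp
    ring
  have hnegInv : -1 / (I * k ^ 2 * t / w) = -(k : ℂ)⁻¹ + I * ((k ^ 2 * t)⁻¹ : ℝ) := by
    rw [hw_def]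
    push_cast
    field_simp
    ring_nf
    simp only [I_sq]
    ring
  have hcpow : (-I * (I * k ^ 2 * t / w)) ^ (1 / 2 : ℂ) = (k * √t : ℂ) * (w⁻¹) ^ (1 / 2 : ℂ) := by
    have : -I * (I * k ^ 2 * t / w) = ((k ^ 2 * t : ℝ) : ℂ) * w⁻¹ := by
      push_cast
      ring_nf
      simp only [I_sq]
      ring
    rw [this, ofReal_mul_cpow (by positivity) (inv_ne_zero hw), ofReal_cpow_half (by positivity),
      Real.sqrt_mul (by positivity), Real.sqrt_sq (Nat.cast_nonneg k)]
    push_cast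
    ring
  have hsqrt : (√t : ℂ) ≠ 0 := ofReal_ne_zero.mpr (Real.sqrt_pos.mpr ht).ne'
  rw [jacobiTheta_eq_inv_cpow_mul_jacobiTheta_neg_inv ((k : ℂ)⁻¹ + I * t),
    ← jacobiTheta_add_natCast_of_even hke, hτ, hshift,
    jacobiTheta_eq_inv_cpow_mul_jacobiTheta_neg_inv, hnegInv, hcpow, mul_inv]
  field_simp

lemma tendsto_mul_sqrt_mul_jacobiTheta_nhds_sum (hk : 0 < k) (hke : Even k) :
    Tendsto (fun t : ℝ => (k * √t : ℂ) * jacobiTheta ((k : ℂ)⁻¹ + I * t)) (𝓝[>] 0)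
      (𝓝 (∑ r : Fin k, cexp (π * I * r ^ 2 / k))) := by
  have hscale := tendsto_const_mul_nhdsGT_zero (c := (k : ℝ) ^ 2) (by positivity)
  have hterm (r : Fin k) :=
    ((tendsto_sqrt_mul_evenKernel ((r : ℝ) / k : ℝ)).comp hscale).ofReal.const_mul
      (cexp (π * I * (r : ℕ) ^ 2 / k))
  have hsum := tendsto_finsetSum Finset.univ fun r _ => hterm r
  simp only [ofReal_one, mul_one] at hsum
  refine hsum.congr' ?_
  filter_upwards [self_mem_nhdsWithin] with t (ht : 0 < t)
  rw [jacobiTheta_inv_add_I_mul_eq_sum hk hke ht, Finset.mul_sum]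
  refine Finset.sum_congr rfl fun r _ => ?_
  rw [Function.comp_apply, Real.sqrt_mul (by positivity), Real.sqrt_sq (Nat.cast_nonneg k)]
  push_cast
  ring

lemma tendsto_mul_sqrt_mul_jacobiTheta_nhds_inv_cpow (hk : 0 < k) (hke : Even k) :
    Tendsto (fun t : ℝ => (k * √t : ℂ) * jacobiTheta ((k : ℂ)⁻¹ + I * t)) (𝓝[>] 0)
      (𝓝 ((-I * (k : ℂ)⁻¹) ^ (1 / 2 : ℂ))⁻¹) := by
  have hslit : -I * (k : ℂ)⁻¹ ∈ slitPlane := by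
    rw [← ofReal_natCast, ← ofReal_inv, mem_slitPlane_iff]
    right
    simpa using hk.ne'
  have hne : -I * (k : ℂ)⁻¹ ≠ 0 := slitPlane_ne_zero hslit
  have hcpow : ContinuousAt (fun t : ℝ =>
      ((-I * ((k : ℂ)⁻¹ + I * t)) ^ (1 / 2 : ℂ))⁻¹ * (((1 + I * k * t)⁻¹) ^ (1 / 2 : ℂ))⁻¹) 0 := by
    fun_prop (disch := simp_all)
  have htheta : Tendsto (fun t : ℝ => jacobiTheta (-(k : ℂ)⁻¹ + I * ((k ^ 2 * t)⁻¹ : ℝ)))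
      (𝓝[>] 0) (𝓝 1) := by
    refine tendsto_jacobiTheta_comap_im_atTop.comp (tendsto_comap_iff.mpr ?_)
    have hscale := tendsto_const_mul_nhdsGT_zero (c := (k : ℝ) ^ 2) (by positivity)
    refine (tendsto_inv_nhdsGT_zero.comp hscale).congr fun t => ?_
    rw [Function.comp_apply, Function.comp_apply, add_im, neg_im, I_mul_im, ofReal_re,
      ← ofReal_natCast, ← ofReal_inv, ofReal_im, neg_zero, zero_add]
  have hprod := (hcpow.tendsto.mono_left nhdsWithin_le_nhds).mul htheta
  simp only [ofReal_zero, mul_zero, add_zero, mul_one, inv_one, one_cpow] at hprod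
  refine hprod.congr' ?_
  filter_upwards [self_mem_nhdsWithin] with t (ht : 0 < t)
  exact (mul_sqrt_mul_jacobiTheta_inv_add_I_mul hk hke ht).symm

theorem sum_cexp_pi_mul_I_mul_sq_div (hk : 0 < k) (hke : Even k) :
    ∑ r : Fin k, cexp (π * I * r ^ 2 / k) = √k * cexp (π * I / 4) := by
  rw [tendsto_nhds_unique (tendsto_mul_sqrt_mul_jacobiTheta_nhds_sum hk hke)
    (tendsto_mul_sqrt_mul_jacobiTheta_nhds_inv_cpow hk hke), ← ofReal_natCast, ← ofReal_inv,
    mul_comm, ofReal_mul_cpow (by positivity) (neg_ne_zero.mpr I_ne_zero),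
    ofReal_cpow_half (by positivity), cpow_def_of_ne_zero (neg_ne_zero.mpr I_ne_zero), log_neg_I,
    mul_inv, ← Complex.exp_neg, Real.sqrt_inv, ofReal_inv, inv_inv]
  congr 2
  ring

theorem sum_cexp_pi_mul_I_mul_sign_mul_sq_div (hk : 0 < k) (hke : Even k) {ε : ℤ}
    (hε : ε = 1 ∨ ε = -1) :
    ∑ r : Fin k, cexp (π * I * ε * r ^ 2 / k) = √k * cexp (π * I * ε / 4) := by
  rcases hε with rfl | rfl
  · simpa using sum_cexp_pi_mul_I_mul_sq_div hk hke
  · have h := congrArg (starRingEnd ℂ) (sum_cexp_pi_mul_I_mul_sq_div hk hke)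
    simp only [map_sum, map_mul, ← Complex.exp_conj, map_div₀, map_pow, conj_ofReal, conj_I,
      conj_natCast, map_ofNat] at h
    push_cast
    convert h using 3 <;> ring

end

noncomputable def gaussSumLevel (k : ℕ) {n : Type*} [Fintype n] [DecidableEq n]
    (L : Matrix n n ℤ) : ℂ :=
  ∑ g : n → Fin k, cexp (π * I / k *
    (((fun i => ((g i : ℕ) : ℤ)) ⬝ᵥ L *ᵥ fun i => ((g i : ℕ) : ℤ) : ℤ) : ℂ))

section
variable (k : ℕ) {m n : Type*} [Fintype m] [DecidableEq m] [Fintype n] [DecidableEq n]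

lemma gaussSumLevel_reindex (e : m ≃ n) (L : Matrix m m ℤ) :
    gaussSumLevel k (reindex e e L) = gaussSumLevel k L := by
  refine Fintype.sum_equiv (Equiv.arrowCongr e (Equiv.refl _)).symm _ _ fun g => ?_
  rw [reindex_apply, submatrix_mulVec_equiv, Equiv.symm_symm, dotProduct_comp_equiv_symm]
  rfl

lemma gaussSumLevel_fromBlocks (A : Matrix m m ℤ) (D : Matrix n n ℤ) :
    gaussSumLevel k (fromBlocks A 0 0 D) = gaussSumLevel k A * gaussSumLevel k D := by
  rw [gaussSumLevel, gaussSumLevel, gaussSumLevel, Finset.sum_mul_sum, ← Fintype.sum_prod_type']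
  refine Fintype.sum_equiv (Equiv.sumArrowEquivProdArrow m n (Fin k)) _ _ fun g => ?_
  have hg : (fun i => ((g i : ℕ) : ℤ)) =
      Sum.elim (fun i => ((g (.inl i) : ℕ) : ℤ)) (fun i => ((g (.inr i) : ℕ) : ℤ)) := by
    ext (_ | _) <;> rfl
  rw [hg, sumElim_dotProduct_fromBlocks_mulVec, ← Complex.exp_add, Int.cast_add, mul_add]
  rfl

lemma gaussSumLevel_smul_one_fin_one (c : ℤ) :
    gaussSumLevel k (c • 1 : Matrix (Fin 1) (Fin 1) ℤ) =
      ∑ x : Fin k, cexp (π * I * c * x ^ 2 / k) := by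
  refine Fintype.sum_equiv (Equiv.funUnique (Fin 1) (Fin k)) _ _ fun g => ?_
  rw [smul_mulVec, one_mulVec, dotProduct_smul, dotProduct, Fin.sum_univ_one, smul_eq_mul,
    Equiv.funUnique_apply, Fin.default_eq_zero]
  push_cast
  ring_nf

end

theorem gauss_sum_stabilization_invariance_general
    (k : ℕ) (hk : 0 < k) (hke : Even k)
    (m : ℕ) (L : Matrix (Fin m) (Fin m) ℤ)
    (ε : ℤ) (hε : ε = 1 ∨ ε = -1) :
    (((k : ℝ) ^ (-(((m : ℝ) + 2) / 2)) : ℝ) : ℂ)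
        * Complex.exp (-((Real.pi : ℂ) * Complex.I *
            (((intSignature L + ε : ℤ) : ℂ)) / 4))
        * ∑ g : Fin (m + 1) → Fin k,
            Complex.exp ((Real.pi : ℂ) * Complex.I / (k : ℂ) *
              ((((fun i => ((g i : ℕ) : ℤ)) ⬝ᵥ
                  ((Matrix.reindex finSumFinEquiv finSumFinEquiv)
                    (Matrix.fromBlocks L 0 0 (ε • (1 : Matrix (Fin 1) (Fin 1) ℤ)))).mulVec
                    fun i => ((g i : ℕ) : ℤ)) : ℤ) : ℂ))
      = (((k : ℝ) ^ (-(((m : ℝ) + 1) / 2)) : ℝ) : ℂ)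
        * Complex.exp (-((Real.pi : ℂ) * Complex.I *
            ((intSignature L : ℤ) : ℂ) / 4))
        * ∑ g : Fin m → Fin k,
            Complex.exp ((Real.pi : ℂ) * Complex.I / (k : ℂ) *
              ((((fun i => ((g i : ℕ) : ℤ)) ⬝ᵥ
                  L.mulVec fun i => ((g i : ℕ) : ℤ)) : ℤ) : ℂ)) := by
  have hsplit : gaussSumLevel k (reindex finSumFinEquiv finSumFinEquiv
      (fromBlocks L 0 0 (ε • (1 : Matrix (Fin 1) (Fin 1) ℤ)))) =
        gaussSumLevel k L * (√k * cexp (π * I * ε / 4)) := by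
    rw [gaussSumLevel_reindex, gaussSumLevel_fromBlocks, gaussSumLevel_smul_one_fin_one,
      sum_cexp_pi_mul_I_mul_sign_mul_sq_div hk hke hε]
  have hpow :
      (k : ℝ) ^ (-(((m : ℝ) + 2) / 2)) = (k : ℝ) ^ (-(((m : ℝ) + 1) / 2)) * (√k)⁻¹ := by
    rw [Real.sqrt_eq_rpow, ← Real.rpow_neg (Nat.cast_nonneg k), ← Real.rpow_add (by positivity)]
    ring_nf
  have hphase :
      cexp (-(π * I * ((intSignature L + ε : ℤ) : ℂ) / 4)) * cexp (π * I * ε / 4) =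
        cexp (-(π * I * (intSignature L : ℂ) / 4)) := by
    rw [← Complex.exp_add]
    push_cast
    ring_nf
  have hsqrt : (√k : ℂ) ≠ 0 :=
    ofReal_ne_zero.mpr (Real.sqrt_pos.mpr (by exact_mod_cast hk)).ne'
  unfold gaussSumLevel at hsplit
  rw [hsplit, hpow, ← hphase]
  push_cast
  field_simp

/-- **Invariance of the normalized Abelian surgery invariant under the Kirby
stabilization move `K1`.**  Adjoining an unknot with framing `ε = ±1` to a
surgery presentation with linking matrix `L` changes the Gauss sum and the
signature phase in compensating ways. -/
theorem gauss_sum_stabilization_invariance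
    (k : ℕ) (hk : 0 < k) (hke : Even k)
    (m : ℕ) (L : Matrix (Fin m) (Fin m) ℤ) (hL : L.IsSymm)
    (ε : ℤ) (hε : ε = 1 ∨ ε = -1) :
    (((k : ℝ) ^ (-(((m : ℝ) + 2) / 2)) : ℝ) : ℂ)
        * Complex.exp (-((Real.pi : ℂ) * Complex.I *
            (((intSignature L + ε : ℤ) : ℂ)) / 4))
        * ∑ g : Fin (m + 1) → Fin k,
            Complex.exp ((Real.pi : ℂ) * Complex.I / (k : ℂ) *
              ((((fun i => ((g i : ℕ) : ℤ)) ⬝ᵥ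
                  ((Matrix.reindex finSumFinEquiv finSumFinEquiv)
                    (Matrix.fromBlocks L 0 0 (ε • (1 : Matrix (Fin 1) (Fin 1) ℤ)))).mulVec
                    fun i => ((g i : ℕ) : ℤ)) : ℤ) : ℂ))
      = (((k : ℝ) ^ (-(((m : ℝ) + 1) / 2)) : ℝ) : ℂ)
        * Complex.exp (-((Real.pi : ℂ) * Complex.I *
            ((intSignature L : ℤ) : ℂ) / 4))
        * ∑ g : Fin m → Fin k,
            Complex.exp ((Real.pi : ℂ) * Complex.I / (k : ℂ) *
              ((((fun i => ((g i : ℕ) : ℤ)) ⬝ᵥ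
                  L.mulVec fun i => ((g i : ℕ) : ℤ)) : ℤ) : ℂ)) :=
  gauss_sum_stabilization_invariance_general k hk hke m L ε hε
end
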